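/- For any finite Markov decision process (S, A, P, R, γ) and any stationary policy π : S → Δ(A), the value function and the π-bisimulation metric satisfy |V^π(s) − V^π(t)| ≤ d^π(s, t) for all states s, t ∈ S. -/

import Mathlib

/-- A probability distribution on a finite set, represented as a nonnegative
function summing to one. -/
def IsProb {X : Type*} [Fintype X] (μ : X → ℝ) : Prop :=
  (∀ x, 0 ≤ μ x) ∧ ∑ x, μ x = 1

/-- A coupling of `μ ∈ Δ(X)` and `ν ∈ Δ(Y)`: a probability distribution on
`X × Y` whose first marginal is `μ` and whose second marginal is `ν`. -/
def IsCoupling {X Y : Type*} [Fintype X] [Fintype Y]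
    (θ : X × Y → ℝ) (μ : X → ℝ) (ν : Y → ℝ) : Prop :=
  IsProb θ ∧ (∀ x, ∑ y, θ (x, y) = μ x) ∧ (∀ y, ∑ x, θ (x, y) = ν y)

/-- The 1-Wasserstein (optimal transport) cost between `μ ∈ Δ(X)` and `ν ∈ Δ(Y)`
with ground cost `d`. -/
noncomputable def Wass {X Y : Type*} [Fintype X] [Fintype Y]
    (d : X → Y → ℝ) (μ : X → ℝ) (ν : Y → ℝ) : ℝ :=
  sInf {c | ∃ θ : X × Y → ℝ, IsCoupling θ μ ν ∧ c = ∑ p : X × Y, θ p * d p.1 p.2}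

/-- `R^π_s = ∑ₐ π(a|s) R(s,a)`, the expected immediate reward of policy `π` at `s`. -/
def Rpi {S A : Type*} [Fintype A] (R : S → A → ℝ) (π : S → A → ℝ) (s : S) : ℝ :=
  ∑ a, π s a * R s a

/-- `P^π_s(s') = ∑ₐ π(a|s) P(s'|s,a)`, the state-transition kernel induced by `π`. -/
def Ppi {S A : Type*} [Fintype A] (P : S → A → S → ℝ) (π : S → A → ℝ) (s s' : S) : ℝ :=
  ∑ a, π s a * P s a s'

/-- The Bellman operator of policy `π`:
`(T V)(s) = R^π_s + γ ∑_{s'} P^π_s(s') V(s')`. -/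
def bellman {S A : Type*} [Fintype S] [Fintype A]
    (γ : ℝ) (R : S → A → ℝ) (P : S → A → S → ℝ) (π : S → A → ℝ)
    (V : S → ℝ) (s : S) : ℝ :=
  Rpi R π s + γ * ∑ s', Ppi P π s s' * V s'

/-- The π-bisimulation operator:
`F(d)(s,t) = |R^π_s − R^π_t| + γ W_d(P^π_s, P^π_t)`. -/
noncomputable def bisimF {S A : Type*} [Fintype S] [Fintype A]
    (γ : ℝ) (R : S → A → ℝ) (P : S → A → S → ℝ) (π : S → A → ℝ)
    (d : S → S → ℝ) (s t : S) : ℝ :=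
  |Rpi R π s - Rpi R π t| + γ * Wass d (Ppi P π s) (Ppi P π t)

/-!
Let `m` bound `|V x - V y| - d x y` over all pairs. Expanding `V` by the Bellman equation and
coupling the two next-state distributions optimally gives
`|V s - V t| ≤ |R^π_s - R^π_t| + γ (W_d(P^π_s, P^π_t) + m) = d s t + γ m`, so the largest value
`M` of `|V x - V y| - d x y` satisfies `M ≤ γ M`, whence `M ≤ 0` as `γ < 1`.
-/

open Finset

lemma nonpos_of_le_mul_of_forall_le {ι : Type*} [Finite ι] {γ : ℝ} (hγ : γ < 1) {f : ι → ℝ}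
    (h : ∀ m, (∀ j, f j ≤ m) → ∀ i, f i ≤ γ * m) (i : ι) : f i ≤ 0 := by
  have : Nonempty ι := ⟨i⟩
  obtain ⟨i₀, hi₀⟩ := Finite.exists_max f
  have hmax : f i₀ ≤ γ * f i₀ := h (f i₀) hi₀ i₀
  have hi₀_nonpos : f i₀ ≤ 0 := by nlinarith
  exact (hi₀ i).trans hi₀_nonpos

section Coupling

variable {X Y : Type*} [Fintype X] [Fintype Y] {μ : X → ℝ} {ν : Y → ℝ}

lemma IsProb.isCoupling_mul (hμ : IsProb μ) (hν : IsProb ν) :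
    IsCoupling (fun p => μ p.1 * ν p.2) μ ν := by
  refine ⟨⟨fun p => mul_nonneg (hμ.1 _) (hν.1 _), ?_⟩, fun x => ?_, fun y => ?_⟩
  · simp_rw [Fintype.sum_prod_type, ← mul_sum, hν.2, mul_one, hμ.2]
  · simp_rw [← mul_sum, hν.2, mul_one]
  · simp_rw [← sum_mul, hμ.2, one_mul]

lemma IsCoupling.sum_mul_sub_sum_mul {θ : X × Y → ℝ} (h : IsCoupling θ μ ν)
    (f : X → ℝ) (g : Y → ℝ) :
    ∑ x, μ x * f x - ∑ y, ν y * g y = ∑ p : X × Y, θ p * (f p.1 - g p.2) := by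
  have hf : ∑ p : X × Y, θ p * f p.1 = ∑ x, μ x * f x := by
    simp_rw [Fintype.sum_prod_type, ← sum_mul, h.2.1]
  have hg : ∑ p : X × Y, θ p * g p.2 = ∑ y, ν y * g y := by
    simp_rw [Fintype.sum_prod_type_right, ← sum_mul, h.2.2]
  simp_rw [mul_sub, sum_sub_distrib, hf, hg]

lemma le_wass (hμ : IsProb μ) (hν : IsProb ν) {d : X → Y → ℝ} {c : ℝ}
    (h : ∀ θ, IsCoupling θ μ ν → c ≤ ∑ p : X × Y, θ p * d p.1 p.2) :
    c ≤ Wass d μ ν :=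
  le_csInf ⟨_, _, hμ.isCoupling_mul hν, rfl⟩ fun _ ⟨θ, hθ, hc⟩ => hc ▸ h θ hθ

/-- The easy half of Kantorovich–Rubinstein duality, with an additive slack `m`. -/
lemma abs_sum_mul_sub_sum_mul_le_wass_add (hμ : IsProb μ) (hν : IsProb ν)
    {d : X → Y → ℝ} {f : X → ℝ} {g : Y → ℝ} {m : ℝ} (h : ∀ x y, |f x - g y| ≤ d x y + m) :
    |∑ x, μ x * f x - ∑ y, ν y * g y| ≤ Wass d μ ν + m := by
  suffices |∑ x, μ x * f x - ∑ y, ν y * g y| - m ≤ Wass d μ ν by linarith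
  refine le_wass hμ hν fun θ hθ => ?_
  have hθ0 : ∀ p, 0 ≤ θ p := hθ.1.1
  calc |∑ x, μ x * f x - ∑ y, ν y * g y| - m
      = |∑ p : X × Y, θ p * (f p.1 - g p.2)| - ∑ p : X × Y, θ p * m := by
        rw [hθ.sum_mul_sub_sum_mul f g, ← sum_mul, hθ.1.2, one_mul]
    _ ≤ ∑ p : X × Y, θ p * |f p.1 - g p.2| - ∑ p : X × Y, θ p * m := by
        gcongr
        refine (abs_sum_le_sum_abs _ _).trans_eq (sum_congr rfl fun p _ => ?_)
        rw [abs_mul, abs_of_nonneg (hθ0 p)]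
    _ ≤ ∑ p : X × Y, θ p * d p.1 p.2 := by
        rw [← sum_sub_distrib]
        gcongr with p
        nlinarith [hθ0 p, h p.1 p.2]

end Coupling

section Policy

variable {S A : Type*} [Fintype S] [Fintype A]

lemma isProb_Ppi {P : S → A → S → ℝ} (hP : ∀ s a, IsProb (P s a))
    {π : S → A → ℝ} (hπ : ∀ s, IsProb (π s)) (s : S) : IsProb (Ppi P π s) := by
  refine ⟨fun x => sum_nonneg fun a _ => mul_nonneg ((hπ s).1 a) ((hP s a).1 x), ?_⟩
  unfold Ppi
  rw [sum_comm]
  simp_rw [← mul_sum, (hP s _).2, mul_one, (hπ s).2]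

lemma abs_bellman_sub_le_bisimF_add {γ : ℝ} (hγ : 0 ≤ γ)
    {P : S → A → S → ℝ} (hP : ∀ s a, IsProb (P s a)) (R : S → A → ℝ)
    {π : S → A → ℝ} (hπ : ∀ s, IsProb (π s)) {V : S → ℝ} {d : S → S → ℝ} {m : ℝ}
    (h : ∀ x y, |V x - V y| ≤ d x y + m) (s t : S) :
    |bellman γ R P π V s - bellman γ R P π V t| ≤ bisimF γ R P π d s t + γ * m := by
  have hnext := abs_sum_mul_sub_sum_mul_le_wass_add
    (isProb_Ppi hP hπ s) (isProb_Ppi hP hπ t) h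
  unfold bellman bisimF
  calc |Rpi R π s + γ * ∑ x, Ppi P π s x * V x - (Rpi R π t + γ * ∑ y, Ppi P π t y * V y)|
      = |(Rpi R π s - Rpi R π t)
          + γ * (∑ x, Ppi P π s x * V x - ∑ y, Ppi P π t y * V y)| := by ring_nf
    _ ≤ |Rpi R π s - Rpi R π t| + γ * |∑ x, Ppi P π s x * V x - ∑ y, Ppi P π t y * V y| :=
        (abs_add_le _ _).trans_eq (by rw [abs_mul, abs_of_nonneg hγ])
    _ ≤ |Rpi R π s - Rpi R π t| + γ * (Wass d (Ppi P π s) (Ppi P π t) + m) := by gcongr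
    _ = _ := by ring

end Policy

theorem abs_value_sub_le_bisim_general {S A : Type*} [Fintype S] [Fintype A]
    (γ : ℝ) (hγ0 : 0 < γ) (hγ1 : γ < 1)
    (P : S → A → S → ℝ) (hP : ∀ s a, IsProb (P s a))
    (R : S → A → ℝ)
    (π : S → A → ℝ) (hπ : ∀ s, IsProb (π s))
    -- `V` is the (unique) fixed point of the Bellman operator of `π`
    (V : S → ℝ) (hV : ∀ s, V s = bellman γ R P π V s)
    -- `dpi` is the (unique) fixed point of the π-bisimulation operator
    (dpi : S → S → ℝ)
    (hdfix : ∀ s t, dpi s t = bisimF γ R P π dpi s t) :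
    ∀ s t, |V s - V t| ≤ dpi s t := by
  intro s t
  have hgap : ∀ m, (∀ p : S × S, |V p.1 - V p.2| - dpi p.1 p.2 ≤ m) →
      ∀ p : S × S, |V p.1 - V p.2| - dpi p.1 p.2 ≤ γ * m := by
    intro m hm p
    have hm' : ∀ x y, |V x - V y| ≤ dpi x y + m := fun x y => by linarith [hm (x, y)]
    have hstep := abs_bellman_sub_le_bisimF_add hγ0.le hP R hπ hm' p.1 p.2
    rw [← hV, ← hV, ← hdfix] at hstep
    linarith
  linarith [nonpos_of_le_mul_of_forall_le hγ1 hgap (s, t)]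

/-- for any finite MDP and stationary policy `π`, the value
function and the π-bisimulation metric satisfy `|V^π(s) − V^π(t)| ≤ d^π(s,t)`. -/
theorem abs_value_sub_le_bisim {S A : Type*} [Fintype S] [Fintype A]
    (γ : ℝ) (hγ0 : 0 < γ) (hγ1 : γ < 1)
    (P : S → A → S → ℝ) (hP : ∀ s a, IsProb (P s a))
    (R : S → A → ℝ) (hR : ∀ s a, 0 ≤ R s a ∧ R s a ≤ 1 - γ)
    (π : S → A → ℝ) (hπ : ∀ s, IsProb (π s))
    -- `V` is the (unique) fixed point of the Bellman operator of `π`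
    (V : S → ℝ) (hV : ∀ s, V s = bellman γ R P π V s)
    -- `dpi` is the (unique) fixed point of the π-bisimulation operator
    (dpi : S → S → ℝ) (hd0 : ∀ s t, 0 ≤ dpi s t)
    (hdfix : ∀ s t, dpi s t = bisimF γ R P π dpi s t) :
    ∀ s t, |V s - V t| ≤ dpi s t :=
  abs_value_sub_le_bisim_general γ hγ0 hγ1 P hP R π hπ V hV dpi hdfix
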